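/- Over a field of characteristic ≠ 2, if M is a fully symmetric n^d × n^d matrix (M^{⊤_k} = M for all k ∈ [d]), then PT-rank(M) ≤ 2^{d−1} · SoS(Q_M). -/

import Mathlib

/-!
Take `s = SoS(Q_M)` squares `Q_M = ∑ ℓ, (mlin c_ℓ)^2` and put `R = ∑ ℓ, c_ℓ c_ℓᵀ`, so that
`Q_M = Q_R`. The `(i, j)` entry of `∑ κ, W^{⊤κ}` is `2^{#{k | i k = j k}}` times the coefficient
of `∏ k, X_(k, i k) X_(k, j k)` in `Q_W`: as `κ` ranges over all subsets, `(i, j)^{⊤κ}` runs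
over the index pairs giving the same monomial, each one equally often. Hence
`∑ κ, M^{⊤κ} = ∑ κ, R^{⊤κ}`. By full symmetry the left side is `2^d M`; on the right,
`R^{⊤κᶜ} = (R^{⊤κ})ᵀ = R^{⊤κ}` because `R` is symmetric, so it is twice the sum over the `κ`
avoiding a fixed coordinate `e`. Thus `M = 2^{-(d-1)} ∑_{e ∉ κ} ∑ ℓ, (c_ℓ c_ℓᵀ)^{⊤κ}`, a sum of
`2^{d-1} s` matrices, each zero or PT-basic.
-/

open Matrix BigOperators

/-- The `κ`-partial transpose of an `n^d × n^d` matrix (indexed by tuples in `[n]^d`). -/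
def ptrans {F : Type*} [Field F] {n d : ℕ} (κ : Finset (Fin d))
    (M : Matrix (Fin d → Fin n) (Fin d → Fin n) F) :
    Matrix (Fin d → Fin n) (Fin d → Fin n) F :=
  fun i j => M (fun k => if k ∈ κ then j k else i k) (fun k => if k ∈ κ then i k else j k)

/-- A matrix is PT-basic if some partial transpose of it has rank 1. -/
def IsPTBasic {F : Type*} [Field F] {n d : ℕ}
    (M : Matrix (Fin d → Fin n) (Fin d → Fin n) F) : Prop :=
  ∃ κ : Finset (Fin d), (ptrans κ M).rank = 1

/-- The PT-rank of `M`: the minimum number of PT-basic matrices summing to `M`. -/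
noncomputable def PTrank {F : Type*} [Field F] {n d : ℕ}
    (M : Matrix (Fin d → Fin n) (Fin d → Fin n) F) : ℕ :=
  sInf { r | ∃ P : Fin r → Matrix (Fin d → Fin n) (Fin d → Fin n) F,
    (∀ i, IsPTBasic (P i)) ∧ M = ∑ i, P i }

/-- The `d`-multilinear polynomial with coefficient function `c` (degree 1 in each of the
`d` blocks of `n` variables `X^{(k)}_a`, variables indexed by `Fin d × Fin n`). -/
noncomputable def mlin {F : Type*} [Field F] {n d : ℕ} (c : (Fin d → Fin n) → F) :
    MvPolynomial (Fin d × Fin n) F :=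
  ∑ i : Fin d → Fin n, MvPolynomial.C (c i) * ∏ k : Fin d, MvPolynomial.X (k, i k)

/-- The `d`-multiquadratic polynomial `Q_M` associated to an `n^d × n^d` matrix `M`. -/
noncomputable def QM {F : Type*} [Field F] {n d : ℕ}
    (M : Matrix (Fin d → Fin n) (Fin d → Fin n) F) : MvPolynomial (Fin d × Fin n) F :=
  ∑ i : Fin d → Fin n, ∑ j : Fin d → Fin n,
    MvPolynomial.C (M i j) * ∏ k : Fin d, (MvPolynomial.X (k, i k) * MvPolynomial.X (k, j k))

/-- The sum-of-squares complexity of `Q_M`: the least `s` such that `Q_M` is a sum of `s`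
squares of `d`-multilinear polynomials. -/
noncomputable def SoSQ {F : Type*} [Field F] {n d : ℕ}
    (M : Matrix (Fin d → Fin n) (Fin d → Fin n) F) : ℕ :=
  sInf { s | ∃ c : Fin s → ((Fin d → Fin n) → F), QM M = ∑ ℓ, (mlin (c ℓ)) ^ 2 }

open Finset

theorem Finset.sum_eq_two_nsmul_sum_powerset_erase {α β : Type*} [Fintype α] [DecidableEq α]
    [AddCommMonoid β] {f : Finset α → β} (hf : ∀ s, f sᶜ = f s) (a : α) :
    ∑ s, f s = 2 • ∑ s ∈ (univ.erase a).powerset, f s := by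
  have hE : (univ.erase a).powerset = ({s | a ∉ s} : Finset (Finset α)) := by
    ext s
    simp [Finset.subset_erase]
  have hcompl : ∑ s with a ∈ s, f s = ∑ s with a ∉ s, f s :=
    Finset.sum_nbij' compl compl (by simp) (by simp) (by simp) (by simp)
      (fun s _ => (hf s).symm)
  rw [hE, two_nsmul, ← Finset.sum_filter_add_sum_filter_not univ (a ∉ ·)]
  simp only [not_not, hcompl]

theorem Multiset.pair_eq_pair_iff {α : Type*} {a b c d : α} :
    ({a, b} : Multiset α) = {c, d} ↔ (a = c ∧ b = d) ∨ (a = d ∧ b = c) := by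
  constructor
  · intro h
    simp [Multiset.insert_eq_cons, Multiset.cons_eq_cons, Multiset.singleton_eq_cons_iff] at h
    aesop
  · rintro (⟨rfl, rfl⟩ | ⟨rfl, rfl⟩)
    exacts [rfl, Multiset.pair_comm _ _]

theorem Matrix.rank_vecMulVec_eq_one {K m : Type*} [Field K] [Fintype m] [DecidableEq m]
    {u v : m → K} (hu : u ≠ 0) (hv : v ≠ 0) : (vecMulVec u v).rank = 1 := by
  refine le_antisymm (rank_vecMulVec_le u v) (Nat.one_le_iff_ne_zero.2 fun h => ?_)
  rw [Matrix.rank, Submodule.finrank_eq_zero, LinearMap.range_eq_bot] at h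
  exact vecMulVec_ne_zero hu hv (Matrix.toLin'.map_eq_zero_iff.1 h)

section PartialTranspose

variable {F : Type*} [Field F] {n d : ℕ} (κ s t : Finset (Fin d))
  (M : Matrix (Fin d → Fin n) (Fin d → Fin n) F)

theorem ptrans_apply (i j : Fin d → Fin n) :
    ptrans κ M i j = M (κ.piecewise j i) (κ.piecewise i j) :=
  rfl

theorem ptrans_empty : ptrans ∅ M = M := by
  ext i j
  simp [ptrans_apply]

@[simp]
theorem ptrans_zero : ptrans κ (0 : Matrix (Fin d → Fin n) (Fin d → Fin n) F) = 0 :=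
  rfl

theorem ptrans_smul (a : F) : ptrans κ (a • M) = a • ptrans κ M :=
  rfl

theorem ptrans_sum {ι : Type*} (u : Finset ι)
    (W : ι → Matrix (Fin d → Fin n) (Fin d → Fin n) F) :
    ptrans κ (∑ ℓ ∈ u, W ℓ) = ∑ ℓ ∈ u, ptrans κ (W ℓ) := by
  ext i j
  simp [ptrans_apply, Matrix.sum_apply]

theorem ptrans_ptrans : ptrans s (ptrans t M) = ptrans (symmDiff s t) M := by
  ext i j
  simp only [ptrans_apply]
  congr 1 <;> ext k <;> by_cases hs : k ∈ s <;> by_cases ht : k ∈ t <;>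
    simp [Finset.piecewise, hs, ht, Finset.mem_symmDiff]

theorem ptrans_ptrans_self : ptrans κ (ptrans κ M) = M := by
  rw [ptrans_ptrans, symmDiff_self, Finset.bot_eq_empty, ptrans_empty]

theorem ptrans_compl : ptrans κᶜ M = (ptrans κ M)ᵀ := by
  ext i j
  simp [ptrans_apply, Finset.piecewise_compl]

variable {M}

theorem Matrix.IsSymm.ptrans (hM : M.IsSymm) : (ptrans κ M).IsSymm := by
  ext i j
  exact hM.apply _ _

theorem ptrans_eq_self (hsym : ∀ k, ptrans {k} M = M) : ptrans κ M = M := by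
  induction κ using Finset.induction_on with
  | empty => exact ptrans_empty M
  | insert a s ha ih =>
    rw [Finset.insert_eq, ← Finset.sup_eq_union,
      ← (Finset.disjoint_singleton_left.2 ha).symmDiff_eq_sup, ← ptrans_ptrans, ih, hsym]

theorem sum_ptrans_of_forall_singleton (hsym : ∀ k, ptrans {k} M = M) :
    ∑ κ, ptrans κ M = (2 : F) ^ d • M := by
  simp [ptrans_eq_self _ hsym, Finset.sum_const, Finset.card_univ,
    ← Nat.cast_smul_eq_nsmul F]

theorem sum_ptrans_of_isSymm (hM : M.IsSymm) (e : Fin d) :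
    ∑ κ, ptrans κ M = (2 : F) • ∑ κ ∈ (univ.erase e).powerset, ptrans κ M := by
  rw [ofNat_smul_eq_nsmul F 2]
  exact Finset.sum_eq_two_nsmul_sum_powerset_erase
    (fun κ => by rw [ptrans_compl, (hM.ptrans κ).eq]) e

end PartialTranspose

section Coefficients

variable {F : Type*} [Field F] {n d : ℕ} (i j : Fin d → Fin n)

noncomputable def pairExponent : (Fin d × Fin n) →₀ ℕ :=
  ∑ k, (Finsupp.single (k, i k) 1 + Finsupp.single (k, j k) 1)

theorem pairExponent_apply (k : Fin d) (a : Fin n) :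
    pairExponent i j (k, a) = Multiset.count a {i k, j k} := by
  rw [pairExponent, Finset.sum_apply', Finset.sum_eq_single k]
  · simp [Finsupp.single_apply, Multiset.count_cons, Multiset.count_singleton, eq_comm,
      add_comm]
  · intro b _ hb
    simp [hb]
  · simp

theorem pairExponent_eq_iff {i' j' : Fin d → Fin n} :
    pairExponent i' j' = pairExponent i j ↔
      ∀ k, ({i' k, j' k} : Multiset (Fin n)) = {i k, j k} := by
  simp only [Finsupp.ext_iff, Prod.forall, pairExponent_apply, Multiset.ext]

theorem prod_X_mul_X :
    (∏ k, (MvPolynomial.X (k, i k) * MvPolynomial.X (k, j k)) :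
        MvPolynomial (Fin d × Fin n) F) = MvPolynomial.monomial (pairExponent i j) 1 := by
  rw [pairExponent, MvPolynomial.monomial_sum_one]
  refine Finset.prod_congr rfl fun k _ => ?_
  rw [MvPolynomial.X, MvPolynomial.X, MvPolynomial.monomial_mul, one_mul]

theorem coeff_QM (W : Matrix (Fin d → Fin n) (Fin d → Fin n) F) (u : (Fin d × Fin n) →₀ ℕ) :
    MvPolynomial.coeff u (QM W)
      = ∑ p : (Fin d → Fin n) × (Fin d → Fin n) with pairExponent p.1 p.2 = u, W p.1 p.2 := by
  simp only [QM, prod_X_mul_X, MvPolynomial.coeff_sum, MvPolynomial.coeff_C_mul,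
    MvPolynomial.coeff_monomial, Finset.sum_filter, ← Finset.sum_product',
    Finset.univ_product_univ, mul_ite, mul_one, mul_zero]

-- `ptrans κ W i j = Function.uncurry W (ptransIdx i j κ)`
def ptransIdx (κ : Finset (Fin d)) : (Fin d → Fin n) × (Fin d → Fin n) :=
  (κ.piecewise j i, κ.piecewise i j)

theorem ptransIdx_eq_iff (κ κ₀ : Finset (Fin d)) :
    ptransIdx i j κ = ptransIdx i j κ₀ ↔
      symmDiff κ κ₀ ⊆ ({k | i k = j k} : Finset (Fin d)) := by
  simp only [ptransIdx, Prod.mk.injEq, funext_iff, Finset.subset_iff, Finset.mem_symmDiff,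
    Finset.mem_filter, Finset.mem_univ, true_and, ← forall_and]
  refine forall_congr' fun k => ?_
  by_cases h : k ∈ κ <;> by_cases h₀ : k ∈ κ₀ <;> simp [h, h₀, eq_comm]

theorem card_ptransIdx_fiber (κ₀ : Finset (Fin d)) :
    #{κ | ptransIdx i j κ = ptransIdx i j κ₀} = 2 ^ #{k | i k = j k} := by
  rw [← Finset.card_powerset]
  refine Finset.card_nbij' (symmDiff · κ₀) (symmDiff · κ₀) ?_ ?_ ?_ ?_
  · intro κ hκ
    rw [Finset.mem_coe, Finset.mem_filter, ptransIdx_eq_iff] at hκ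
    exact Finset.mem_powerset.2 hκ.2
  · intro τ hτ
    rw [Finset.mem_coe, Finset.mem_filter, ptransIdx_eq_iff, symmDiff_symmDiff_cancel_right]
    exact ⟨Finset.mem_univ _, Finset.mem_powerset.1 hτ⟩
  · intro κ _
    exact symmDiff_symmDiff_cancel_right _ _
  · intro τ _
    exact symmDiff_symmDiff_cancel_right _ _

theorem image_ptransIdx :
    univ.image (ptransIdx i j) = ({p | pairExponent p.1 p.2 = pairExponent i j} :
      Finset ((Fin d → Fin n) × (Fin d → Fin n))) := by
  ext ⟨i', j'⟩
  simp only [Finset.mem_image, Finset.mem_univ, true_and, Finset.mem_filter,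
    pairExponent_eq_iff, Multiset.pair_eq_pair_iff]
  constructor
  · rintro ⟨κ, hκ⟩ k
    simp only [ptransIdx, Prod.mk.injEq] at hκ
    obtain ⟨rfl, rfl⟩ := hκ
    by_cases h : k ∈ κ <;> simp [h]
  · intro h
    refine ⟨({k | i' k ≠ i k} : Finset (Fin d)), ?_⟩
    simp only [ptransIdx, Prod.mk.injEq, funext_iff, ← forall_and]
    intro k
    by_cases hk : i' k = i k <;> rcases h k with h' | h' <;> simp_all

theorem sum_ptrans_apply (W : Matrix (Fin d → Fin n) (Fin d → Fin n) F) :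
    (∑ κ, ptrans κ W) i j =
      2 ^ #{k | i k = j k} * MvPolynomial.coeff (pairExponent i j) (QM W) := by
  have hW : ∀ κ, ptrans κ W i j = Function.uncurry W (ptransIdx i j κ) := fun _ => rfl
  rw [Matrix.sum_apply, Finset.sum_congr rfl fun κ _ => hW κ, Finset.sum_comp, coeff_QM,
    ← image_ptransIdx, Finset.mul_sum]
  refine Finset.sum_congr rfl fun p hp => ?_
  obtain ⟨κ₀, -, rfl⟩ := Finset.mem_image.1 hp
  rw [card_ptransIdx_fiber, nsmul_eq_mul]
  push_cast
  rfl

end Coefficients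

section SumsOfSquares

variable {F : Type*} [Field F] {n d : ℕ}

theorem sum_ptrans_eq_of_QM_eq {M N : Matrix (Fin d → Fin n) (Fin d → Fin n) F}
    (h : QM M = QM N) : ∑ κ, ptrans κ M = ∑ κ, ptrans κ N := by
  ext i j
  rw [sum_ptrans_apply, sum_ptrans_apply, h]

theorem QM_sum {ι : Type*} (s : Finset ι) (W : ι → Matrix (Fin d → Fin n) (Fin d → Fin n) F) :
    QM (∑ ℓ ∈ s, W ℓ) = ∑ ℓ ∈ s, QM (W ℓ) := by
  simp only [QM, Matrix.sum_apply, map_sum, Finset.sum_mul]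
  symm
  rw [Finset.sum_comm]
  exact Finset.sum_congr rfl fun _ _ => Finset.sum_comm

theorem mlin_sq (c : (Fin d → Fin n) → F) : mlin c ^ 2 = QM (vecMulVec c c) := by
  simp only [mlin, QM, sq, Finset.sum_mul_sum, vecMulVec_apply, MvPolynomial.C_mul,
    Finset.prod_mul_distrib]
  exact Finset.sum_congr rfl fun _ _ => Finset.sum_congr rfl fun _ _ => by ring

theorem eq_sum_ptrans_vecMulVec {ι : Type*} [Fintype ι] (h2 : (2 : F) ≠ 0) (e : Fin d)
    {M : Matrix (Fin d → Fin n) (Fin d → Fin n) F} (hsym : ∀ k, ptrans {k} M = M)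
    (c : ι → (Fin d → Fin n) → F) (hc : QM M = ∑ ℓ, mlin (c ℓ) ^ 2) :
    M = ∑ p ∈ (univ.erase e).powerset ×ˢ univ,
      ptrans p.1 (vecMulVec (((2 : F) ^ (d - 1))⁻¹ • c p.2) (c p.2)) := by
  set R := ∑ ℓ, vecMulVec (c ℓ) (c ℓ)
  have hQ : QM M = QM R := by simp only [hc, R, QM_sum, mlin_sq]
  have hR : R.IsSymm :=
    IsSymm.ext fun a b => by simp only [R, Matrix.sum_apply, vecMulVec_apply, mul_comm]
  have hpow : (2 : F) * 2 ^ (d - 1) = 2 ^ d := by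
    rw [← pow_succ', Nat.sub_add_cancel e.pos]
  have hM : (2 : F) ^ (d - 1) • M = ∑ κ ∈ (univ.erase e).powerset, ptrans κ R := by
    apply smul_right_injective _ h2
    simp only [smul_smul, hpow, ← sum_ptrans_of_forall_singleton hsym,
      sum_ptrans_eq_of_QM_eq hQ, sum_ptrans_of_isSymm hR e]
  rw [← eq_inv_smul_iff₀ (pow_ne_zero _ h2)] at hM
  rw [hM, Finset.sum_product, Finset.smul_sum]
  simp only [R, ptrans_sum, Finset.smul_sum, smul_vecMulVec, ptrans_smul]

end SumsOfSquares

section PTRank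

variable {F : Type*} [Field F] {n d : ℕ}

theorem isPTBasic_ptrans_vecMulVec (κ : Finset (Fin d)) {u v : (Fin d → Fin n) → F}
    (hu : u ≠ 0) (hv : v ≠ 0) : IsPTBasic (ptrans κ (vecMulVec u v)) :=
  ⟨κ, by rw [ptrans_ptrans_self]; exact rank_vecMulVec_eq_one hu hv⟩

theorem PTrank_le_card {ι : Type*} {M : Matrix (Fin d → Fin n) (Fin d → Fin n) F}
    (s : Finset ι) (B : ι → Matrix (Fin d → Fin n) (Fin d → Fin n) F)
    (hB : ∀ p ∈ s, B p = 0 ∨ IsPTBasic (B p)) (hM : M = ∑ p ∈ s, B p) : PTrank M ≤ #s := by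
  classical
  set T := {p ∈ s | B p ≠ 0}
  refine (Nat.sInf_le ?_).trans (Finset.card_filter_le s fun p => B p ≠ 0)
  refine ⟨fun m => B (T.equivFin.symm m), fun m => ?_, ?_⟩
  · obtain ⟨hm, hne⟩ := Finset.mem_filter.1 (T.equivFin.symm m).2
    exact (hB _ hm).resolve_left hne
  · rw [hM, ← Finset.sum_filter_ne_zero, ← Finset.sum_coe_sort T]
    exact (Equiv.sum_comp T.equivFin.symm (fun p : T => B p)).symm

end PTRank

/-- Over a field of characteristic ≠ 2, if `M` is fully symmetric (`M^{⊤_k} = M` for all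
`k ∈ [d]`) and `Q_M` admits some sum-of-squares decomposition into squares of
`d`-multilinear polynomials, then `PT-rank(M) ≤ 2^{d-1} · SoS(Q_M)`. -/
theorem stmt8 {F : Type*} [Field F] (h2 : (2 : F) ≠ 0) {n d : ℕ} (hd : 1 ≤ d)
    (M : Matrix (Fin d → Fin n) (Fin d → Fin n) F)
    (hsym : ∀ k : Fin d, ptrans {k} M = M)
    (hfin : ∃ s : ℕ, ∃ c : Fin s → ((Fin d → Fin n) → F), QM M = ∑ ℓ, (mlin (c ℓ)) ^ 2) :
    PTrank M ≤ 2 ^ (d - 1) * SoSQ M := by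
  obtain ⟨c, hc⟩ : ∃ c : Fin (SoSQ M) → ((Fin d → Fin n) → F), QM M = ∑ ℓ, mlin (c ℓ) ^ 2 :=
    Nat.sInf_mem hfin
  let e : Fin d := ⟨0, hd⟩
  refine (PTrank_le_card _ _ (fun p _ => ?_) (eq_sum_ptrans_vecMulVec h2 e hsym c hc)).trans ?_
  · by_cases hc0 : c p.2 = 0
    · simp [hc0]
    · exact .inr (isPTBasic_ptrans_vecMulVec _ (smul_ne_zero (by simp [h2]) hc0) hc0)
  · simp [Finset.card_powerset, Finset.card_erase_of_mem]
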